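/- Let u, û ∈ ℝ^m be nonzero with ‖u‖ = 1, and let x_β, x̂ ∈ ℝ^n be nonzero. Let y = (u, x_β) and ŷ = (û, x̂) denote the stacked (concatenated) vectors in ℝ^{m+n}. Then sin∠(x̂, x_β) ≤ √( 1 + 1/‖x_β‖² ) · sin∠(ŷ, y) and sin∠(û, u) ≤ √( 1 + ‖x_β‖² ) · sin∠(ŷ, y). -/

import Mathlib

/-- `sinAngle w' w` is the sine of the angle between `w` and the line spanned
by `w'`, i.e. `min_{μ ∈ ℝ} ‖w − μ w'‖ / ‖w‖`. -/
noncomputable def sinAngle {ι : Type*} [Fintype ι] (w' w : EuclideanSpace ℝ ι) : ℝ :=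
  ⨅ μ : ℝ, ‖w - μ • w'‖ / ‖w‖

/-- The stacked (concatenated) vector of `a` and `b`. -/
def stack {m k : ℕ} (a : EuclideanSpace ℝ (Fin m)) (b : EuclideanSpace ℝ (Fin k)) :
    EuclideanSpace ℝ (Fin m ⊕ Fin k) :=
  WithLp.toLp 2 (Sum.elim a b)

/-! For every `μ`, `‖y - μ • ŷ‖² = ‖u - μ • û‖² + ‖x_β - μ • x̂‖²`, so the residual of the stacked
vector dominates the residual of each block. Taking infima over `μ` bounds the sine of each block
by `sin∠(ŷ, y)` times `‖y‖ / ‖block‖`, and `‖y‖ = √(1 + ‖x_β‖²)` because `‖u‖ = 1`. -/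

lemma norm_stack {m k : ℕ} (a : EuclideanSpace ℝ (Fin m)) (b : EuclideanSpace ℝ (Fin k)) :
    ‖stack a b‖ = √(‖a‖ ^ 2 + ‖b‖ ^ 2) := by
  simp only [EuclideanSpace.norm_eq, Fintype.sum_sum_type]
  rw [Real.sq_sqrt (by positivity), Real.sq_sqrt (by positivity)]
  simp [stack]

lemma norm_left_le_norm_stack {m k : ℕ} (a : EuclideanSpace ℝ (Fin m))
    (b : EuclideanSpace ℝ (Fin k)) : ‖a‖ ≤ ‖stack a b‖ := by
  rw [norm_stack]
  exact Real.le_sqrt_of_sq_le (le_add_of_nonneg_right (sq_nonneg _))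

lemma norm_right_le_norm_stack {m k : ℕ} (a : EuclideanSpace ℝ (Fin m))
    (b : EuclideanSpace ℝ (Fin k)) : ‖b‖ ≤ ‖stack a b‖ := by
  rw [norm_stack]
  exact Real.le_sqrt_of_sq_le (le_add_of_nonneg_left (sq_nonneg _))

lemma stack_sub_smul {m k : ℕ} (a a' : EuclideanSpace ℝ (Fin m))
    (b b' : EuclideanSpace ℝ (Fin k)) (μ : ℝ) :
    stack a b - μ • stack a' b' = stack (a - μ • a') (b - μ • b') := by
  ext i; cases i <;> rfl

lemma sinAngle_le_mul_of_norm_sub_smul_le {ι κ : Type*} [Fintype ι] [Fintype κ]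
    {w' w : EuclideanSpace ℝ ι} {v' v : EuclideanSpace ℝ κ} (hv : v ≠ 0)
    (h : ∀ μ : ℝ, ‖w - μ • w'‖ ≤ ‖v - μ • v'‖) :
    sinAngle w' w ≤ ‖v‖ / ‖w‖ * sinAngle v' v := by
  have hv_norm : ‖v‖ ≠ 0 := norm_ne_zero_iff.mpr hv
  rw [sinAngle, sinAngle, Real.mul_iInf_of_nonneg (by positivity)]
  refine le_ciInf fun μ => (ciInf_le ⟨0, by rintro _ ⟨ν, rfl⟩; positivity⟩ μ).trans ?_
  rw [div_mul_div_comm, mul_comm ‖v‖, mul_div_mul_right _ _ hv_norm]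
  exact div_le_div_of_nonneg_right (h μ) (norm_nonneg _)

theorem stmt_18_general {m n : ℕ}
    (u uh : EuclideanSpace ℝ (Fin m)) (hu : ‖u‖ = 1)
    (xb xh : EuclideanSpace ℝ (Fin n)) (hxb : xb ≠ 0) :
    sinAngle xh xb
        ≤ Real.sqrt (1 + 1 / ‖xb‖ ^ 2) * sinAngle (stack uh xh) (stack u xb) ∧
    sinAngle uh u
        ≤ Real.sqrt (1 + ‖xb‖ ^ 2) * sinAngle (stack uh xh) (stack u xb) := by
  have hxb_pos : 0 < ‖xb‖ := norm_pos_iff.mpr hxb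
  have hy : ‖stack u xb‖ = √(1 + ‖xb‖ ^ 2) := by rw [norm_stack, hu, one_pow]
  have hy0 : stack u xb ≠ 0 := by
    rw [← norm_pos_iff, hy]; positivity
  constructor
  · have hres (μ : ℝ) : ‖xb - μ • xh‖ ≤ ‖stack u xb - μ • stack uh xh‖ := by
      rw [stack_sub_smul]; exact norm_right_le_norm_stack _ _
    convert sinAngle_le_mul_of_norm_sub_smul_le hy0 hres using 2
    rw [hy, eq_div_iff hxb_pos.ne', ← Real.sqrt_sq hxb_pos.le, ← Real.sqrt_mul (by positivity),
      Real.sqrt_sq hxb_pos.le]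
    congr 1
    field_simp
    ring
  · have hres (μ : ℝ) : ‖u - μ • uh‖ ≤ ‖stack u xb - μ • stack uh xh‖ := by
      rw [stack_sub_smul]; exact norm_left_le_norm_stack _ _
    convert sinAngle_le_mul_of_norm_sub_smul_le hy0 hres using 2
    rw [hy, hu, div_one]

/-- with y = (u, x_β) and ŷ = (û, x̂),
sin∠(x̂, x_β) ≤ √(1 + 1/‖x_β‖²) sin∠(ŷ, y) and
sin∠(û, u) ≤ √(1 + ‖x_β‖²) sin∠(ŷ, y). -/
theorem stmt_18 {m n : ℕ}
    (u uh : EuclideanSpace ℝ (Fin m)) (hu : ‖u‖ = 1) (huh : uh ≠ 0)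
    (xb xh : EuclideanSpace ℝ (Fin n)) (hxb : xb ≠ 0) (hxh : xh ≠ 0) :
    sinAngle xh xb
        ≤ Real.sqrt (1 + 1 / ‖xb‖ ^ 2) * sinAngle (stack uh xh) (stack u xb) ∧
    sinAngle uh u
        ≤ Real.sqrt (1 + ‖xb‖ ^ 2) * sinAngle (stack uh xh) (stack u xb) :=
  stmt_18_general u uh hu xb xh hxb
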